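/- arXiv:1910.04406 — 4 statements merged into one kernel-verified Lean document; each statement's English description precedes it below -/
import Mathlib

section
/- The doctor-proposing deferred acceptance algorithm always terminates and outputs a stable matching: there is no doctor-hospital pair (d,h), unmatched to each other, such that d prefers h to d's assigned partner (or to being unmatched) and h prefers d to h's assigned partner (or to being unmatched). -/
/-- A two-sided matching market: each doctor has an ordered preference list of
acceptable hospitals, and vice versa (earlier in the list = more preferred). -/
structure Market (D H : Type*) where
  dpref : D → List H
  hpref : H → List D

variable {D H : Type*}

/-- Doctor `d` strictly prefers hospital `h` to the (optional) assignment `o`. -/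
def dPrefers [DecidableEq H] (M : Market D H) (d : D) (h : H) : Option H → Prop
  | none => h ∈ M.dpref d
  | some h' => h ∈ M.dpref d ∧ (M.dpref d).idxOf h < (M.dpref d).idxOf h'

/-- Hospital `h` strictly prefers doctor `d` to the (optional) assignment `o`. -/
def hPrefers [DecidableEq D] (M : Market D H) (h : H) (d : D) : Option D → Prop
  | none => d ∈ M.hpref h
  | some d' => d ∈ M.hpref h ∧ (M.hpref h).idxOf d < (M.hpref h).idxOf d'

/-- `μD, μH` describe a matching: assignments on the two sides are consistent. -/
def IsMatching (μD : D → Option H) (μH : H → Option D) : Prop :=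
  ∀ d h, μD d = some h ↔ μH h = some d

/-- The pair `(d, h)` blocks the matching `(μD, μH)`. -/
def Blocks [DecidableEq D] [DecidableEq H] (M : Market D H) (μD : D → Option H) (μH : H → Option D) (d : D) (h : H) : Prop :=
  dPrefers M d h (μD d) ∧ hPrefers M h d (μH h)

/-- Every matched pair is mutually acceptable (individual rationality). -/
def IndRational (M : Market D H) (μD : D → Option H) : Prop :=
  ∀ d h, μD d = some h → h ∈ M.dpref d ∧ d ∈ M.hpref h

/-- A stable matching: a consistent, individually rational matching
with no blocking pair. -/
def IsStable [DecidableEq D] [DecidableEq H] (M : Market D H) (μD : D → Option H) (μH : H → Option D) : Prop :=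
  IsMatching μD μH ∧ IndRational M μD ∧ ∀ d h, ¬ Blocks M μD μH d h

/-- State of the deferred-acceptance algorithm: the current tentative assignment
of doctors, and the list of hospitals each doctor has not yet proposed to. -/
structure MState (D H : Type*) where
  asgn : D → Option H
  rem : D → List H

/-- The doctor currently (tentatively) matched to hospital `h`, if any. -/
noncomputable def curMatch [Fintype D] [DecidableEq D] [DecidableEq H]
    (asgn : D → Option H) (h : H) : Option D :=
  (Finset.univ.filter (fun d => asgn d = some h)).toList.head?

/-- Does hospital `h` accept a proposal from doctor `d`, given its current match? -/
def accepts [DecidableEq D] (M : Market D H) (h : H) (d : D) : Option D → Bool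
  | none => (M.hpref h).contains d
  | some d' => (M.hpref h).contains d &&
      decide ((M.hpref h).idxOf d < (M.hpref h).idxOf d')

/-- One step of doctor-proposing deferred acceptance: some unmatched doctor with
a nonempty remaining list proposes to their favorite not-yet-proposed-to
hospital, which accepts iff it prefers the proposer to its current match. -/
noncomputable def stepF [Fintype D] [DecidableEq D] [DecidableEq H] (M : Market D H)
    (s : MState D H) : MState D H :=
  match (Finset.univ.filter (fun d => s.asgn d = none ∧ s.rem d ≠ [])).toList.head? with
  | none => s
  | some d =>
    match s.rem d with
    | [] => s
    | h :: rest =>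
      if accepts M h d (curMatch s.asgn h) then
        { asgn := fun d' => if d' = d then some h
            else if s.asgn d' = some h then none else s.asgn d',
          rem := fun d' => if d' = d then rest else s.rem d' }
      else
        { asgn := s.asgn, rem := fun d' => if d' = d then rest else s.rem d' }

/-- The initial state: everyone unmatched, no proposals made. -/
def initState (M : Market D H) : MState D H := ⟨fun _ => none, M.dpref⟩

/-- An upper bound on the number of steps the algorithm can take. -/
def dpdaFuel [Fintype D] (M : Market D H) : ℕ := (∑ d, (M.dpref d).length) + 1

/-- The final state of doctor-proposing deferred acceptance. -/
noncomputable def dpdaState [Fintype D] [DecidableEq D] [DecidableEq H] (M : Market D H) : MState D H :=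
  (stepF M)^[dpdaFuel M] (initState M)

/-- The doctor-side matching produced by doctor-proposing deferred acceptance. -/
noncomputable def dpda [Fintype D] [DecidableEq D] [DecidableEq H] (M : Market D H) : D → Option H :=
  (dpdaState M).asgn

/-- The hospital-side matching produced by doctor-proposing deferred acceptance. -/
noncomputable def dpdaH [Fintype D] [DecidableEq D] [DecidableEq H] (M : Market D H) : H → Option D :=
  curMatch (dpdaState M).asgn

section DAProof

variable {D H : Type*} [Fintype D] [DecidableEq D] [DecidableEq H]

lemma head?_mem {α : Type*} {l : List α} {a : α} (h : l.head? = some a) : a ∈ l := by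
  cases l with
  | nil => simp at h
  | cons b t => simp at h; simp [h]

lemma curMatch_mem {asgn : D → Option H} {h : H} {d : D}
    (hc : curMatch asgn h = some d) : asgn d = some h := by
  have hd : d ∈ (Finset.univ.filter (fun d => asgn d = some h)).toList := head?_mem hc
  simpa using (Finset.mem_toList.mp hd)

lemma curMatch_eq_some {asgn : D → Option H} {h : H} {d : D}
    (hinj : ∀ d1 d2, asgn d1 = some h → asgn d2 = some h → d1 = d2)
    (hd : asgn d = some h) : curMatch asgn h = some d := by
  have : (Finset.univ.filter (fun d => asgn d = some h)) = {d} := by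
    ext d'
    simp only [Finset.mem_filter, Finset.mem_univ, true_and, Finset.mem_singleton]
    exact ⟨fun hd' => hinj d' d hd' hd, fun h' => h' ▸ hd⟩
  simp [curMatch, this]

/-- The eligible-proposer head of a state. -/
noncomputable def propHead (s : MState D H) : Option D :=
  (Finset.univ.filter (fun d => s.asgn d = none ∧ s.rem d ≠ [])).toList.head?

lemma propHead_spec {s : MState D H} {d : D} (h : propHead s = some d) :
    s.asgn d = none ∧ s.rem d ≠ [] := by
  have := head?_mem h
  simpa using Finset.mem_toList.mp this

lemma propHead_none {s : MState D H} (h : propHead s = none) :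
    ∀ d : D, s.asgn d = none → s.rem d = [] := by
  intro d h1
  by_contra h2
  have hemp : (Finset.univ.filter (fun d => s.asgn d = none ∧ s.rem d ≠ [])) = ∅ := by
    rw [← Finset.toList_eq_nil]
    exact List.head?_eq_none_iff.mp h
  have : d ∈ (Finset.univ.filter (fun d => s.asgn d = none ∧ s.rem d ≠ [])) := by
    simp [h1, h2]
  rw [hemp] at this
  simp at this

lemma stepF_none (M : Market D H) (s : MState D H) (h : propHead s = none) :
    stepF M s = s := by
  unfold stepF
  rw [show (Finset.univ.filter (fun d => s.asgn d = none ∧ s.rem d ≠ [])).toList.head?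
    = none from h]

lemma stepF_accept (M : Market D H) (s : MState D H) {d : D} {h : H} {rest : List H}
    (hd : propHead s = some d) (hr : s.rem d = h :: rest)
    (hacc : accepts M h d (curMatch s.asgn h) = true) :
    stepF M s =
      { asgn := fun d' => if d' = d then some h
          else if s.asgn d' = some h then none else s.asgn d',
        rem := fun d' => if d' = d then rest else s.rem d' } := by
  unfold stepF
  rw [show (Finset.univ.filter (fun d => s.asgn d = none ∧ s.rem d ≠ [])).toList.head?
    = some d from hd]
  simp only [hr, hacc, if_true]

lemma stepF_reject (M : Market D H) (s : MState D H) {d : D} {h : H} {rest : List H}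
    (hd : propHead s = some d) (hr : s.rem d = h :: rest)
    (hacc : ¬ accepts M h d (curMatch s.asgn h) = true) :
    stepF M s =
      { asgn := s.asgn, rem := fun d' => if d' = d then rest else s.rem d' } := by
  unfold stepF
  rw [show (Finset.univ.filter (fun d => s.asgn d = none ∧ s.rem d ≠ [])).toList.head?
    = some d from hd]
  simp [hr, hacc]

/-- The invariant maintained by deferred acceptance. -/
structure DAInv (M : Market D H) (s : MState D H) : Prop where
  suffix : ∀ d, ∃ pre, M.dpref d = pre ++ s.rem d
  matched : ∀ d h0, s.asgn d = some h0 →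
    (∃ pre, M.dpref d = pre ++ h0 :: s.rem d) ∧ d ∈ M.hpref h0
  inj : ∀ d1 d2 h, s.asgn d1 = some h → s.asgn d2 = some h → d1 = d2
  noregret : ∀ d h pre, M.dpref d = pre ++ s.rem d → h ∈ pre →
    ¬ hPrefers M h d (curMatch s.asgn h)

lemma inv_init (M : Market D H) : DAInv M (initState M) := by
  refine ⟨fun d => ⟨[], rfl⟩, fun d h0 hd => by simp [initState] at hd,
    fun d1 d2 h h1 _ => by simp [initState] at h1, fun d h pre hpre hmem => ?_⟩
  have hpre' : M.dpref d = pre ++ M.dpref d := hpre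
  have : pre = [] := by
    have hl := congrArg List.length hpre'
    simp only [List.length_append] at hl
    have : pre.length = 0 := by omega
    exact List.eq_nil_of_length_eq_zero this
  simp [this] at hmem

lemma inv_step (M : Market D H) (s : MState D H) (hs : DAInv M s) : DAInv M (stepF M s) := by
  cases hhead : propHead s with
  | none => rw [stepF_none M s hhead]; exact hs
  | some d =>
    obtain ⟨hdnone, hdne⟩ := propHead_spec hhead
    cases hrem : s.rem d with
    | nil => exact absurd hrem hdne
    | cons h rest =>
      obtain ⟨pre0, hpre0⟩ := hs.suffix d
      rw [hrem] at hpre0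
      by_cases hacc : accepts M h d (curMatch s.asgn h) = true
      · -- accepted
        rw [stepF_accept M s hhead hrem hacc]
        set A : D → Option H := fun d' => if d' = d then some h
            else if s.asgn d' = some h then none else s.asgn d' with hA
        have hdmemh : d ∈ M.hpref h := by
          unfold accepts at hacc
          cases hc : curMatch s.asgn h with
          | none => rw [hc] at hacc; simpa using hacc
          | some d' => rw [hc] at hacc; simp at hacc; exact hacc.1
        have hAval : ∀ d' h', A d' = some h' ↔
            (d' = d ∧ h' = h) ∨ (d' ≠ d ∧ s.asgn d' ≠ some h ∧ s.asgn d' = some h') := by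
          intro d' h'
          by_cases hd' : d' = d
          · rw [hd']
            have hAd : A d = some h := by simp [hA]
            rw [hAd]
            constructor
            · intro hh
              injection hh with hh
              exact Or.inl ⟨rfl, hh.symm⟩
            · rintro (⟨-, rfl⟩ | ⟨hc, -, -⟩)
              · rfl
              · exact absurd rfl hc
          · by_cases hsd : s.asgn d' = some h
            · simp [hA, hd', hsd]
            · simp [hA, hd', hsd]
        have hinjA : ∀ d1 d2 h', A d1 = some h' → A d2 = some h' → d1 = d2 := by
          intro d1 d2 h' h1 h2
          rcases (hAval d1 h').mp h1 with ⟨e1, e2⟩ | ⟨n1, n2, n3⟩ <;>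
            rcases (hAval d2 h').mp h2 with ⟨f1, f2⟩ | ⟨f1', f2', f3'⟩
          · rw [e1, f1]
          · subst e2; exact absurd f3' f2'
          · subst f2; exact absurd n3 n2
          · exact hs.inj d1 d2 h' n3 f3'
        have hcm_ne : ∀ h', h' ≠ h → curMatch A h' = curMatch s.asgn h' := by
          intro h' hne
          have hset : Finset.univ.filter (fun d'' => A d'' = some h')
              = Finset.univ.filter (fun d'' => s.asgn d'' = some h') := by
            apply Finset.filter_congr
            intro d' _
            constructor
            · intro hA'
              rcases (hAval d' h').mp hA' with ⟨-, e2⟩ | ⟨-, -, e3⟩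
              · exact absurd e2 hne
              · exact e3
            · intro hsd
              refine (hAval d' h').mpr (Or.inr ⟨?_, ?_, hsd⟩)
              · rintro rfl; rw [hdnone] at hsd; exact Option.some_ne_none _ hsd.symm
              · rw [hsd]; intro hcon
                exact hne (by injection hcon)
          unfold curMatch
          rw [hset]
        have hcm_h : curMatch A h = some d :=
          curMatch_eq_some (fun d1 d2 => hinjA d1 d2 h) (by simp [hA])
        have hmono : ∀ h' d0, hPrefers M h' d0 (curMatch A h') →
            hPrefers M h' d0 (curMatch s.asgn h') := by
          intro h' d0 hp
          by_cases hne : h' = h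
          · subst hne
            rw [hcm_h] at hp
            obtain ⟨hm0, hlt0⟩ := hp
            unfold accepts at hacc
            cases hc : curMatch s.asgn h' with
            | none => exact hm0
            | some d' =>
              rw [hc] at hacc; simp at hacc
              exact ⟨hm0, hlt0.trans hacc.2⟩
          · rwa [hcm_ne h' hne] at hp
        refine ⟨?_, ?_, hinjA, ?_⟩
        · intro d'
          by_cases hd' : d' = d
          · subst hd'; exact ⟨pre0 ++ [h], by simp [hpre0]⟩
          · simpa [hd'] using hs.suffix d'
        · intro d' h' hA'
          rcases (hAval d' h').mp hA' with ⟨e1, e2⟩ | ⟨n1, -, n3⟩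
          · subst e1; subst e2
            refine ⟨⟨pre0, ?_⟩, hdmemh⟩
            simpa using hpre0
          · have := hs.matched d' h' n3
            simpa [n1] using this
        · intro d0 h1 pre1 hpre1 hmem1
          dsimp only at hpre1 ⊢
          by_cases hd0 : d0 = d
          · subst hd0
            rw [if_pos rfl] at hpre1
            have hpre1eq : pre1 = pre0 ++ [h] := by
              apply List.append_cancel_right (as := pre1) (bs := rest)
              rw [← hpre1, hpre0]; simp
            rw [hpre1eq] at hmem1
            rcases List.mem_append.mp hmem1 with hold | hnew
            · intro hp
              exact hs.noregret d0 h1 pre0 (by rw [hrem]; exact hpre0) hold (hmono h1 d0 hp)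
            · have : h1 = h := by simpa using hnew
              subst this
              rw [hcm_h]
              rintro ⟨-, hlt⟩
              exact absurd hlt (lt_irrefl _)
          · simp only [if_neg hd0] at hpre1
            intro hp
            exact hs.noregret d0 h1 pre1 hpre1 hmem1 (hmono h1 d0 hp)
      · -- rejected
        rw [stepF_reject M s hhead hrem hacc]
        refine ⟨?_, ?_, hs.inj, ?_⟩
        · intro d'
          by_cases hd' : d' = d
          · subst hd'; exact ⟨pre0 ++ [h], by simp [hpre0]⟩
          · simpa [hd'] using hs.suffix d'
        · intro d' h' hA'
          simp only at hA'
          by_cases hd' : d' = d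
          · subst hd'; rw [hdnone] at hA'; exact absurd hA'.symm (Option.some_ne_none _)
          · have := hs.matched d' h' hA'
            simpa [hd'] using this
        · intro d0 h1 pre1 hpre1 hmem1
          dsimp only at hpre1 ⊢
          by_cases hd0 : d0 = d
          · subst hd0
            rw [if_pos rfl] at hpre1
            have hpre1eq : pre1 = pre0 ++ [h] := by
              apply List.append_cancel_right (as := pre1) (bs := rest)
              rw [← hpre1, hpre0]; simp
            rw [hpre1eq] at hmem1
            rcases List.mem_append.mp hmem1 with hold | hnew
            · exact hs.noregret d0 h1 pre0 (by rw [hrem]; exact hpre0) hold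
            · have : h1 = h := by simpa using hnew
              subst this
              unfold accepts at hacc
              cases hc : curMatch s.asgn h1 with
              | none =>
                rw [hc] at hacc
                intro hp
                have hdm : d0 ∈ M.hpref h1 := hp
                exact hacc (by simpa using hdm)
              | some d' =>
                rw [hc] at hacc; simp at hacc
                rintro ⟨hm, hlt⟩
                exact absurd hlt (by simpa using hacc hm)
          · simp only [if_neg hd0] at hpre1
            exact hs.noregret d0 h1 pre1 hpre1 hmem1

/-- Termination measure. -/
noncomputable def phi (s : MState D H) : ℕ := ∑ d, (s.rem d).length

def DADone (s : MState D H) : Prop := ∀ d : D, s.asgn d = none → s.rem d = []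

lemma step_of_done (M : Market D H) (s : MState D H) (hd : DADone s) : stepF M s = s := by
  apply stepF_none
  cases hhead : propHead s with
  | none => rfl
  | some d =>
    obtain ⟨h1, h2⟩ := propHead_spec hhead
    exact absurd (hd d h1) h2

lemma phi_step (M : Market D H) (s : MState D H) (hnd : ¬ DADone s) :
    phi (stepF M s) < phi s := by
  cases hhead : propHead s with
  | none => exact absurd (propHead_none hhead) hnd
  | some d =>
    obtain ⟨hdnone, hdne⟩ := propHead_spec hhead
    cases hrem : s.rem d with
    | nil => exact absurd hrem hdne
    | cons h rest =>
      have key : (∑ d' : D, (if d' = d then rest else s.rem d').length) < phi s := by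
        unfold phi
        apply Finset.sum_lt_sum
        · intro i _
          by_cases hi : i = d
          · subst hi; simp [hrem]
          · simp [hi]
        · exact ⟨d, Finset.mem_univ d, by simp [hrem]⟩
      by_cases hacc : accepts M h d (curMatch s.asgn h) = true
      · rw [stepF_accept M s hhead hrem hacc]; exact key
      · rw [stepF_reject M s hhead hrem hacc]; exact key

lemma done_iterate (M : Market D H) : ∀ (n : ℕ) (s : MState D H), phi s < n →
    DADone ((stepF M)^[n] s) := by
  intro n
  induction n with
  | zero => intro s hs; omega
  | succ n ih =>
    intro s hs
    by_cases hd : DADone s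
    · rw [Function.iterate_fixed (step_of_done M s hd) (n + 1)]
      exact hd
    · rw [Function.iterate_succ_apply]
      exact ih _ (by have := phi_step M s hd; omega)

lemma inv_iterate (M : Market D H) (n : ℕ) (s : MState D H) (hs : DAInv M s) :
    DAInv M ((stepF M)^[n] s) := by
  induction n with
  | zero => exact hs
  | succ n ih => rw [Function.iterate_succ_apply']; exact inv_step M _ ih

lemma indexOf_append_cons_le {α : Type*} [DecidableEq α] (a : α) :
    ∀ (pre l : List α), (pre ++ a :: l).idxOf a ≤ pre.length := by
  intro pre
  induction pre with
  | nil => intro l; simp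
  | cons b pre ih =>
    intro l
    rw [List.cons_append]
    by_cases hba : b = a
    · rw [List.idxOf_cons_eq _ hba]
      simp
    · rw [List.idxOf_cons_ne _ hba, List.length_cons]
      exact Nat.succ_le_succ (ih l)

lemma mem_of_indexOf_lt {α : Type*} [DecidableEq α] {a : α} {pre l : List α}
    (hmem : a ∈ pre ++ l) (hlt : (pre ++ l).idxOf a < pre.length) : a ∈ pre := by
  have hlen : (pre ++ l).idxOf a < (pre ++ l).length := List.idxOf_lt_length_iff.mpr hmem
  have hget : (pre ++ l)[(pre ++ l).idxOf a] = a := List.getElem_idxOf hlen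
  rw [List.getElem_append_left hlt] at hget
  exact hget ▸ List.getElem_mem hlt

end DAProof

/-- The doctor-proposing deferred acceptance algorithm (a total
function, hence terminating) always outputs a stable matching: the two sides'
assignments are consistent, matched pairs are mutually acceptable, and there is
no doctor-hospital pair `(d, h)`, unmatched to each other, such that `d` prefers
`h` to `d`'s assigned partner (or to being unmatched) and `h` prefers `d` to
`h`'s assigned partner (or to being unmatched). -/
theorem dpda_isStable {D H : Type*} [Fintype D] [DecidableEq D] [DecidableEq H]
    (M : Market D H) : IsStable M (dpda M) (dpdaH M) := by
  have hinv : DAInv M (dpdaState M) := inv_iterate M _ _ (inv_init M)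
  have hdone : DADone (dpdaState M) := by
    apply done_iterate
    show phi (initState M) < dpdaFuel M
    unfold phi initState dpdaFuel
    exact Nat.lt_succ_self _
  refine ⟨?_, ?_, ?_⟩
  · intro d h
    exact ⟨fun hd => curMatch_eq_some (fun d1 d2 => hinv.inj d1 d2 h) hd, curMatch_mem⟩
  · intro d h hd
    obtain ⟨⟨pre, hpre⟩, hm⟩ := hinv.matched d h hd
    exact ⟨by rw [hpre]; simp, hm⟩
  · rintro d h ⟨hdp, hhp⟩
    have hhp' : hPrefers M h d (curMatch (dpdaState M).asgn h) := hhp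
    cases hmu : (dpdaState M).asgn d with
    | none =>
      have hmu' : dpda M d = none := hmu
      rw [hmu'] at hdp
      have hdpm : h ∈ M.dpref d := hdp
      have hrem : (dpdaState M).rem d = [] := hdone d hmu
      exact hinv.noregret d h (M.dpref d) (by rw [hrem]; simp) hdpm hhp'
    | some h0 =>
      have hmu' : dpda M d = some h0 := hmu
      rw [hmu'] at hdp
      obtain ⟨hmem, hlt⟩ : h ∈ M.dpref d ∧ (M.dpref d).idxOf h < (M.dpref d).idxOf h0 := hdp
      obtain ⟨⟨pre, hpre⟩, -⟩ := hinv.matched d h0 hmu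
      have hle : (M.dpref d).idxOf h0 ≤ pre.length := by
        rw [hpre]; exact indexOf_append_cons_le h0 pre _
      have hlt' : (M.dpref d).idxOf h < pre.length := lt_of_lt_of_le hlt hle
      have hmempre : h ∈ pre := by
        refine mem_of_indexOf_lt (l := h0 :: (dpdaState M).rem d) ?_ ?_
        · rw [← hpre]; exact hmem
        · rw [← hpre]; exact hlt'
      exact hinv.noregret d h (pre ++ [h0]) (by rw [hpre]; simp)
        (List.mem_append_left _ hmempre) hhp'
end

section
/- (Rural Hospital Theorem) For any fixed preference profile, the set of agents who are matched is the same in every stable matching: if μ and μ' are both stable, then for every agent a, μ(a) = ∅ if and only if μ'(a) = ∅. -/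
variable {D H : Type*}

/-- Swapped market: hospitals become doctors and vice versa. -/
def Market.swap (M : Market D H) : Market H D := ⟨M.hpref, M.dpref⟩

lemma dPrefers_swap [DecidableEq D] [DecidableEq H] (M : Market D H) (h : H) (d : D)
    (o : Option D) : dPrefers M.swap h d o ↔ hPrefers M h d o := by
  cases o <;> simp [dPrefers, hPrefers, Market.swap]

lemma hPrefers_swap [DecidableEq D] [DecidableEq H] (M : Market D H) (d : D) (h : H)
    (o : Option H) : hPrefers M.swap d h o ↔ dPrefers M d h o := by
  cases o <;> simp [dPrefers, hPrefers, Market.swap]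

lemma IsStable.swap [DecidableEq D] [DecidableEq H] {M : Market D H}
    {μD : D → Option H} {μH : H → Option D} (hs : IsStable M μD μH) :
    IsStable M.swap μH μD := by
  obtain ⟨hm, hir, hnb⟩ := hs
  refine ⟨fun h d => (hm d h).symm, ?_, ?_⟩
  · intro h d hhd
    have := hir d h ((hm d h).mpr hhd)
    exact ⟨this.2, this.1⟩
  · intro h d hb
    obtain ⟨hb1, hb2⟩ := hb
    exact hnb d h ⟨(hPrefers_swap M d h (μD d)).mp hb2, (dPrefers_swap M h d (μH h)).mp hb1⟩

/-- Key lemma: a doctor unmatched in one stable matching is unmatched in every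
stable matching. -/
lemma unmatched_of_unmatched {D H : Type*} [Finite D] [DecidableEq D] [DecidableEq H]
    (M : Market D H) (μD μD' : D → Option H) (μH μH' : H → Option D)
    (h1 : IsStable M μD μH) (h2 : IsStable M μD' μH')
    (d0 : D) (hd : μD' d0 = none) : μD d0 = none := by
  obtain ⟨hm1, hir1, hnb1⟩ := h1
  obtain ⟨hm2, hir2, hnb2⟩ := h2
  by_contra hne
  obtain ⟨h0, hh0⟩ := Option.ne_none_iff_exists'.mp hne
  -- invariant on pairs
  set Inv : D → H → Prop := fun d h => μD d = some h ∧ dPrefers M d h (μD' d) with hInv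
  have base : Inv d0 h0 := by
    refine ⟨hh0, ?_⟩
    rw [hd]
    exact (hir1 d0 h0 hh0).1
  -- the step
  have step : ∀ d h, Inv d h → ∃ p : D × H, Inv p.1 p.2 ∧ μD' p.1 = some h := by
    rintro d h ⟨hμ, hpr⟩
    have hdh : d ∈ (M.hpref h) := (hir1 d h hμ).2
    have nb2 := hnb2 d h
    have nh : ¬ hPrefers M h d (μH' h) := fun hh => nb2 ⟨hpr, hh⟩
    cases hH' : μH' h with
    | none => rw [hH'] at nh; exact absurd hdh nh
    | some d' =>
      rw [hH'] at nh
      have hμ'd' : μD' d' = some h := (hm2 d' h).mpr hH'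
      have hd'mem : d' ∈ M.hpref h := (hir2 d' h hμ'd').2
      have hle : (M.hpref h).idxOf d' ≤ (M.hpref h).idxOf d := by
        by_contra hlt
        exact nh ⟨hdh, lt_of_not_ge hlt⟩
      have hdne : d' ≠ d := by
        rintro rfl
        rw [hμ'd'] at hpr
        exact absurd hpr.2 (lt_irrefl _)
      have hlt : (M.hpref h).idxOf d' < (M.hpref h).idxOf d :=
        lt_of_le_of_ne hle (fun he => hdne ((List.idxOf_inj hd'mem).mp he))
      have hHh : μH h = some d := (hm1 d h).mp hμ
      have hhp : hPrefers M h d' (μH h) := by rw [hHh]; exact ⟨hd'mem, hlt⟩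
      have nb1 := hnb1 d' h
      have nd : ¬ dPrefers M d' h (μD d') := fun hh => nb1 ⟨hh, hhp⟩
      have hhmem : h ∈ M.dpref d' := (hir2 d' h hμ'd').1
      cases hD : μD d' with
      | none => rw [hD] at nd; exact absurd hhmem nd
      | some h'' =>
        rw [hD] at nd
        have hle2 : (M.dpref d').idxOf h'' ≤ (M.dpref d').idxOf h := by
          by_contra hlt2
          exact nd ⟨hhmem, lt_of_not_ge hlt2⟩
        have hne2 : h'' ≠ h := by
          rintro rfl
          exact hdne (Option.some_injective _ (((hm1 d' h'').mp hD).symm.trans hHh))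
        have hmem2 : h'' ∈ M.dpref d' := (hir1 d' h'' hD).1
        have hlt2 : (M.dpref d').idxOf h'' < (M.dpref d').idxOf h :=
          lt_of_le_of_ne hle2 (fun he => hne2 ((List.idxOf_inj hmem2).mp he))
        refine ⟨(d', h''), ⟨hD, ?_⟩, hμ'd'⟩
        rw [hμ'd']
        exact ⟨hmem2, hlt2⟩
  -- build the infinite sequence
  have next : ∀ p : D × H, ∃ q : D × H, Inv p.1 p.2 → Inv q.1 q.2 ∧ μD' q.1 = some p.2 := by
    intro p
    by_cases hp : Inv p.1 p.2
    · obtain ⟨q, hq⟩ := step p.1 p.2 hp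
      exact ⟨q, fun _ => hq⟩
    · exact ⟨p, fun h => absurd h hp⟩
  choose nx hnx using next
  set f : ℕ → D × H := fun n => nx^[n] (d0, h0) with hf
  have hf0 : f 0 = (d0, h0) := rfl
  have hfs : ∀ n, f (n + 1) = nx (f n) := fun n => Function.iterate_succ_apply' nx n _
  have finv : ∀ n, Inv (f n).1 (f n).2 := by
    intro n
    induction n with
    | zero => exact base
    | succ k ih => rw [hfs]; exact (hnx (f k) ih).1
  have flink : ∀ n, μD' (f (n + 1)).1 = some (f n).2 := by
    intro n
    rw [hfs]
    exact (hnx (f n) (finv n)).2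
  -- injectivity of the doctor sequence
  have finj : Function.Injective (fun n => (f n).1) := by
    intro n m
    induction n generalizing m with
    | zero =>
      cases m with
      | zero => intro _; rfl
      | succ m' =>
        intro he
        simp only at he
        have := flink m'
        rw [← he, hf0] at this
        simp [hd] at this
    | succ n' ih =>
      cases m with
      | zero =>
        intro he
        simp only at he
        have := flink n'
        rw [he, hf0] at this
        simp [hd] at this
      | succ m' =>
        intro he
        simp only at he
        have e1 : some (f n').2 = some (f m').2 := by
          rw [← flink n', ← flink m', he]
        have e2 : (f n').2 = (f m').2 := Option.some_injective _ e1
        have e3 : μH (f n').2 = some (f n').1 := (hm1 _ _).mp (finv n').1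
        have e4 : μH (f n').2 = some (f m').1 := by
          rw [e2]; exact (hm1 _ _).mp (finv m').1
        have : (f n').1 = (f m').1 := Option.some_injective _ (e3.symm.trans e4)
        rw [ih this]
  exact absurd finj (not_injective_infinite_finite _)

/-- **Rural Hospital Theorem.** For any fixed preference profile,
the set of agents who are matched is the same in every stable matching: if
`(μD, μH)` and `(μD', μH')` are both stable, then every doctor (resp. hospital)
is unmatched in one iff it is unmatched in the other. -/
theorem rural_hospital {D H : Type*} [Fintype D] [Fintype H] [DecidableEq D] [DecidableEq H]
    (M : Market D H) (μD μD' : D → Option H) (μH μH' : H → Option D)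
    (h1 : IsStable M μD μH) (h2 : IsStable M μD' μH') :
    (∀ d : D, μD d = none ↔ μD' d = none) ∧
    (∀ h : H, μH h = none ↔ μH' h = none) := by
  constructor
  · intro d
    constructor
    · intro h; exact unmatched_of_unmatched M μD' μD μH' μH h2 h1 d h
    · intro h; exact unmatched_of_unmatched M μD μD' μH μH' h1 h2 d h
  · intro h
    constructor
    · intro hh; exact unmatched_of_unmatched M.swap μH' μH μD' μD h2.swap h1.swap h hh
    · intro hh; exact unmatched_of_unmatched M.swap μH μH' μD μD' h1.swap h2.swap h hh
end

section
/- (Truncation lemma) Fix a hospital h* and a preference profile P, and let P_i be P with h*'s list truncated at rank i (doctors ranked worse than i become unacceptable to h*). Then h* has a stable partner (under P) of rank better than i if and only if h* is matched in the doctor-optimal stable matching for P_i. -/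
variable {D H : Type*}

/-- The market `P` with hospital `h⋆`'s preference list truncated at rank `i`:
doctors that `h⋆` ranks worse than `i` become unacceptable to `h⋆`. -/
def truncate [DecidableEq H] (M : Market D H) (hstar : H) (i : ℕ) : Market D H :=
  { dpref := M.dpref,
    hpref := fun h => if h = hstar then (M.hpref hstar).take i else M.hpref h }

namespace TruncAux

variable {α : Type*} [DecidableEq α] {x y : α}

lemma indexOf_le_of_getElem : ∀ {l : List α} {n : ℕ} (hn : n < l.length), l[n] = x →
    l.idxOf x ≤ n := by
  intro l
  induction l with
  | nil => intro n hn; simp at hn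
  | cons b t ih =>
    intro n hn hx
    rcases n with _ | m
    · simp at hx; simp [hx, List.idxOf_cons_self]
    · by_cases hb : b = x
      · simp [hb, List.idxOf_cons_self]
      · rw [List.idxOf_cons_ne _ (by simpa using hb)]
        simpa using ih (by simpa using hn) (by simpa using hx)

lemma eq_of_indexOf_eq {l : List α} (hx : x ∈ l) (hy : y ∈ l)
    (h : l.idxOf x = l.idxOf y) : x = y := by
  have h1 := List.getElem?_idxOf hx
  have h2 := List.getElem?_idxOf hy
  rw [h, h2] at h1
  exact (Option.some_injective _ h1).symm

lemma indexOf_lt_of_mem_take {l : List α} {i : ℕ} (hx : x ∈ l.take i) :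
    l.idxOf x < i := by
  obtain ⟨n, hn, hget⟩ := List.getElem_of_mem hx
  rw [List.getElem_take] at hget
  calc l.idxOf x ≤ n := indexOf_le_of_getElem (lt_of_lt_of_le hn (by simp [List.length_take])) hget
    _ < i := lt_of_lt_of_le hn (by simp [List.length_take])

lemma mem_take_of_indexOf_lt {l : List α} {i : ℕ} (hx : x ∈ l) (h : l.idxOf x < i) :
    x ∈ l.take i := by
  have hlen := List.idxOf_lt_length_iff.2 hx
  have : (l.take i)[l.idxOf x]'(by simp [List.length_take]; omega) = x := by
    rw [List.getElem_take]; exact List.getElem_idxOf hlen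
  exact this ▸ List.getElem_mem _

lemma indexOf_take {l : List α} {i : ℕ} (hx : x ∈ l.take i) :
    (l.take i).idxOf x = l.idxOf x := by
  conv_rhs => rw [← List.take_append_drop i l]
  rw [List.idxOf_append_of_mem hx]

lemma eq_of_indexOf_eq_pos {l : List α} {n : ℕ} (hn : n < l.length)
    (hidx : l.idxOf x = n) : x = l[n] := by
  have hmem : x ∈ l := List.idxOf_lt_length_iff.1 (hidx ▸ hn)
  have h1 := List.getElem?_idxOf hmem
  rw [hidx, List.getElem?_eq_getElem hn] at h1
  exact (Option.some_injective _ h1).symm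


end TruncAux
namespace TruncAux

lemma indexOf_append_cons_le {α : Type*} [DecidableEq α] (p : List α) (x : α) (r : List α) :
    (p ++ x :: r).idxOf x ≤ p.length := by
  by_cases hx : x ∈ p
  · rw [List.idxOf_append_of_mem hx]; exact List.idxOf_le_length
  · simp [List.idxOf_append_of_notMem hx]

lemma eq_of_indexOf_append_cons {α : Type*} [DecidableEq α] {p : List α} {x y : α} {r : List α}
    (h : (p ++ x :: r).idxOf y = p.length) : y = x := by
  have hn : p.length < (p ++ x :: r).length := by simp
  have := eq_of_indexOf_eq_pos hn h
  rw [List.getElem_append_right (le_refl p.length)] at this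
  simpa using this

variable {D H : Type*} [Fintype D] [DecidableEq D] [DecidableEq H]

lemma curMatch_eq_some_of {asgn : D → Option H} {h : H} {d : D}
    (inj : ∀ ⦃d1 d2⦄, asgn d1 = some h → asgn d2 = some h → d1 = d2)
    (hd : asgn d = some h) : curMatch asgn h = some d := by
  have hf : Finset.univ.filter (fun d' => asgn d' = some h) = {d} := by
    ext d'
    simp only [Finset.mem_filter, Finset.mem_univ, true_and, Finset.mem_singleton]
    exact ⟨fun hx => inj hx hd, fun hx => hx ▸ hd⟩
  rw [curMatch, hf, Finset.toList_singleton]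
  rfl

lemma asgn_of_curMatch_eq_some {asgn : D → Option H} {h : H} {d : D}
    (hc : curMatch asgn h = some d) : asgn d = some h := by
  obtain ⟨ys, hys⟩ := List.head?_eq_some_iff.mp hc
  have : d ∈ (Finset.univ.filter (fun d' => asgn d' = some h)).toList := by
    rw [hys]; exact List.mem_cons_self
  simpa using (Finset.mem_toList.mp this)

lemma curMatch_congr {asgn asgn' : D → Option H} {h : H}
    (he : ∀ d, asgn d = some h ↔ asgn' d = some h) : curMatch asgn h = curMatch asgn' h := by
  unfold curMatch
  congr 2
  ext d
  simp [he d]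

/-- The invariant maintained by deferred acceptance. -/
structure Inv (M : Market D H) (s : MState D H) : Prop where
  inj : ∀ ⦃d d' h⦄, s.asgn d = some h → s.asgn d' = some h → d = d'
  suff : ∀ d, s.rem d <:+ M.dpref d
  matched : ∀ ⦃d h⦄, s.asgn d = some h → ((h :: s.rem d) <:+ M.dpref d) ∧ d ∈ M.hpref h
  hmono : ∀ ⦃d h⦄ ⦃p : List H⦄, M.dpref d = p ++ s.rem d → h ∈ p → d ∈ M.hpref h →
    ∃ d', curMatch s.asgn h = some d' ∧ d' ∈ M.hpref h ∧
      (M.hpref h).idxOf d' ≤ (M.hpref h).idxOf d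
  opt : ∀ ⦃μD : D → Option H⦄ ⦃μH : H → Option D⦄, IsStable M μD μH →
    ∀ ⦃d h⦄, μD d = some h → s.asgn d = some h ∨
      ∀ ⦃p : List H⦄, M.dpref d = p ++ s.rem d → p.length ≤ (M.dpref d).idxOf h

lemma inv_init (M : Market D H) : Inv M (initState M) := by
  constructor
  · intro d d' h hx; simp [initState] at hx
  · intro d; exact List.suffix_refl _
  · intro d h hx; simp [initState] at hx
  · intro d h p hpd hhp _
    have hl := congrArg List.length hpd
    rw [List.length_append] at hl
    simp only [initState] at hl
    have : p = [] := List.length_eq_zero_iff.mp (by omega)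
    simp [this] at hhp
  · intro μD μH _ d h _
    right
    intro p hpd
    have hl := congrArg List.length hpd
    rw [List.length_append] at hl
    simp only [initState] at hl
    omega

/-- The algorithm is done: every unmatched doctor has exhausted their list. -/
def Done (s : MState D H) : Prop := ∀ d, s.asgn d = none → s.rem d = []

lemma filter_eq_empty_iff_done {s : MState D H} :
    Finset.univ.filter (fun d => s.asgn d = none ∧ s.rem d ≠ []) = ∅ ↔ Done s := by
  rw [Finset.filter_eq_empty_iff]
  constructor
  · intro h d hd
    by_contra hne
    exact h (Finset.mem_univ d) ⟨hd, hne⟩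
  · rintro h d - ⟨h1, h2⟩
    exact h2 (h d h1)

lemma stepF_eq_self_of_done {M : Market D H} {s : MState D H} (hd : Done s) :
    stepF M s = s := by
  unfold stepF
  rw [filter_eq_empty_iff_done.mpr hd, Finset.toList_empty]
  rfl

lemma stepF_eq {M : Market D H} {s : MState D H} {d0 : D}
    (hF : (Finset.univ.filter (fun d => s.asgn d = none ∧ s.rem d ≠ [])).toList.head? = some d0)
    {h0 : H} {rest : List H} (hrem : s.rem d0 = h0 :: rest) :
    stepF M s = if accepts M h0 d0 (curMatch s.asgn h0) then
        { asgn := fun d' => if d' = d0 then some h0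
            else if s.asgn d' = some h0 then none else s.asgn d',
          rem := fun d' => if d' = d0 then rest else s.rem d' }
      else { asgn := s.asgn, rem := fun d' => if d' = d0 then rest else s.rem d' } := by
  unfold stepF
  rw [hF]
  dsimp only
  rw [hrem]

lemma head?_filter_mem {s : MState D H} {d0 : D}
    (hF : (Finset.univ.filter (fun d => s.asgn d = none ∧ s.rem d ≠ [])).toList.head? = some d0) :
    s.asgn d0 = none ∧ s.rem d0 ≠ [] := by
  obtain ⟨ys, hys⟩ := List.head?_eq_some_iff.mp hF
  have : d0 ∈ (Finset.univ.filter (fun d => s.asgn d = none ∧ s.rem d ≠ [])).toList := by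
    rw [hys]; exact List.mem_cons_self
  simpa using Finset.mem_toList.mp this

def msr (s : MState D H) : ℕ := ∑ d, (s.rem d).length

lemma msr_step_lt {M : Market D H} {s : MState D H} (hd : ¬ Done s) :
    msr (stepF M s) < msr s := by
  cases hF : (Finset.univ.filter (fun d => s.asgn d = none ∧ s.rem d ≠ [])).toList.head? with
  | none =>
    exfalso
    apply hd
    rw [← filter_eq_empty_iff_done, ← Finset.toList_eq_nil]
    exact List.head?_eq_none_iff.mp hF
  | some d0 =>
    have hd0 := head?_filter_mem hF
    cases hrem : s.rem d0 with
    | nil => exact absurd hrem hd0.2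
    | cons h0 rest =>
      have key : ∀ (t : MState D H), t.rem = (fun d' => if d' = d0 then rest else s.rem d') →
          msr t < msr s := by
        intro t ht
        unfold msr
        rw [ht]
        apply Finset.sum_lt_sum
        · intro i _
          by_cases hi : i = d0
          · subst hi; simp [hrem]
          · simp [hi]
        · exact ⟨d0, Finset.mem_univ d0, by simp [hrem]⟩
      rw [stepF_eq hF hrem]
      by_cases hacc : accepts M h0 d0 (curMatch s.asgn h0) = true
      · rw [if_pos hacc]; exact key _ rfl
      · rw [if_neg hacc]; exact key _ rfl

lemma done_iterate {M : Market D H} : ∀ (n : ℕ) (s : MState D H), msr s < n →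
    Done ((stepF M)^[n] s) := by
  intro n
  induction n with
  | zero => intro s hs; omega
  | succ m ih =>
    intro s hs
    by_cases hd : Done s
    · rw [Function.iterate_fixed (stepF_eq_self_of_done hd) (m+1)]
      exact hd
    · rw [Function.iterate_succ_apply]
      exact ih _ (by have := msr_step_lt (M := M) hd; omega)

lemma done_dpdaState (M : Market D H) : Done (dpdaState M) := by
  apply done_iterate
  unfold msr initState dpdaFuel
  simp

end TruncAux
namespace TruncAux
variable {D H : Type*} [Fintype D] [DecidableEq D] [DecidableEq H]

set_option maxHeartbeats 1000000 in
lemma inv_accept {M : Market D H} {s : MState D H} (hs : Inv M s)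
    {d0 : D} {h0 : H} {rest : List H}
    (hnone : s.asgn d0 = none) (hrem : s.rem d0 = h0 :: rest)
    (hacc : accepts M h0 d0 (curMatch s.asgn h0) = true) :
    Inv M { asgn := fun d' => if d' = d0 then some h0
              else if s.asgn d' = some h0 then none else s.asgn d',
            rem := fun d' => if d' = d0 then rest else s.rem d' } := by
  obtain ⟨p0, hp0⟩ := hs.suff d0
  rw [hrem] at hp0
  -- facts extracted from acceptance
  have hd0h0 : d0 ∈ M.hpref h0 := by
    cases hcur : curMatch s.asgn h0 <;> rw [hcur] at hacc <;>
      simp [accepts] at hacc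
    · exact hacc
    · exact hacc.1
  have hbeat : ∀ d1, curMatch s.asgn h0 = some d1 →
      (M.hpref h0).idxOf d0 < (M.hpref h0).idxOf d1 := by
    intro d1 hcur
    rw [hcur] at hacc
    simp [accepts] at hacc
    exact hacc.2
  -- characterization of the new assignment
  have hA : ∀ d h, (if d = d0 then some h0 else if s.asgn d = some h0 then none else s.asgn d)
        = some h ↔ (d = d0 ∧ h = h0) ∨ (d ≠ d0 ∧ s.asgn d = some h ∧ h ≠ h0) := by
    intro d h
    by_cases hd : d = d0
    · subst hd
      simp [eq_comm]
    · rw [if_neg hd]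
      by_cases hh : s.asgn d = some h0
      · rw [if_pos hh]
        simp [hd, hh]
        exact fun hx => hx.symm
      · rw [if_neg hh]
        simp [hd]
        intro hx
        rintro rfl
        exact hh hx
  have inj' : ∀ ⦃d d' h⦄,
      (if d = d0 then some h0 else if s.asgn d = some h0 then none else s.asgn d) = some h →
      (if d' = d0 then some h0 else if s.asgn d' = some h0 then none else s.asgn d') = some h →
      d = d' := by
    intro d d' h hx hy
    rw [hA] at hx hy
    rcases hx with ⟨hxd, hxh⟩ | ⟨hd, hx, hxh⟩ <;> rcases hy with ⟨hyd, hyh⟩ | ⟨hd', hy, hyh⟩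
    · rw [hxd, hyd]
    · exact absurd hxh (by exact fun he => hyh he)
    · exact absurd hyh (by exact fun he => hxh he)
    · exact hs.inj hx hy
  -- curMatch facts for the new assignment
  have cm_new : curMatch
      (fun d' => if d' = d0 then some h0 else if s.asgn d' = some h0 then none else s.asgn d')
      h0 = some d0 := by
    apply curMatch_eq_some_of
    · intro d1 d2 hx hy; exact inj' hx hy
    · rw [if_pos rfl]
  have cm_other : ∀ h, h ≠ h0 → curMatch
      (fun d' => if d' = d0 then some h0 else if s.asgn d' = some h0 then none else s.asgn d')
      h = curMatch s.asgn h := by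
    intro h hh
    apply curMatch_congr
    intro d
    rw [hA]
    constructor
    · rintro (⟨-, hx⟩ | ⟨-, hx, -⟩)
      · exact absurd hx hh
      · exact hx
    · intro hx
      refine Or.inr ⟨?_, hx, hh⟩
      rintro rfl; rw [hnone] at hx; exact absurd hx (by simp)
  constructor
  · exact inj'
  · intro d
    by_cases hd : d = d0
    · subst hd
      simp only [if_pos rfl]
      exact ⟨p0 ++ [h0], by simpa using hp0⟩
    · simp only [if_neg hd]
      exact hs.suff d
  · intro d h hx
    simp only at hx ⊢
    rw [hA] at hx
    rcases hx with ⟨hxd, hxh⟩ | ⟨hd, hx, -⟩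
    · subst hxd; subst hxh
      simp only [if_pos rfl]
      exact ⟨⟨p0, hp0⟩, hd0h0⟩
    · simp only [if_neg hd]
      exact hs.matched hx
  · intro d h p hpd hhp hdh
    simp only at hpd ⊢
    by_cases hd : d = d0
    · subst hd
      rw [if_pos rfl] at hpd
      have hp : p = p0 ++ [h0] := by
        apply List.append_cancel_right (bs := rest)
        rw [← hpd, ← hp0]
        simp
      subst hp
      rcases List.mem_append.mp hhp with hmem | hmem
      · obtain ⟨d', hcm', hmem', hle'⟩ :=
          hs.hmono (show M.dpref d = p0 ++ s.rem d by rw [hrem]; exact hp0.symm) hmem hdh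
        by_cases hh : h = h0
        · subst hh
          exact ⟨d, cm_new, hd0h0, le_of_lt (lt_of_lt_of_le (hbeat d' hcm') hle')⟩
        · exact ⟨d', (cm_other h hh) ▸ hcm', hmem', hle'⟩
      · have hh : h = h0 := by simpa using hmem
        subst hh
        exact ⟨d, cm_new, hd0h0, le_refl _⟩
    · rw [if_neg hd] at hpd
      obtain ⟨d', hcm', hmem', hle'⟩ := hs.hmono hpd hhp hdh
      by_cases hh : h = h0
      · subst hh
        exact ⟨d0, cm_new, hd0h0, le_of_lt (lt_of_lt_of_le (hbeat d' hcm') hle')⟩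
      · exact ⟨d', (cm_other h hh) ▸ hcm', hmem', hle'⟩
  · intro μD μH hst d h hμ
    simp only
    by_cases hd : d = d0
    · subst hd
      by_cases hh : h = h0
      · subst hh; left; rw [if_pos rfl]
      · right
        intro p hpd
        rw [if_pos rfl] at hpd
        have hp : p = p0 ++ [h0] := by
          apply List.append_cancel_right (bs := rest)
          rw [← hpd, ← hp0]; simp
        subst hp
        rcases hs.opt hst hμ with hx | hx
        · rw [hnone] at hx; exact absurd hx (by simp)
        · have h1 : p0.length ≤ (M.dpref d).idxOf h :=
            hx (show M.dpref d = p0 ++ s.rem d by rw [hrem]; exact hp0.symm)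
          have h2 : (M.dpref d).idxOf h ≠ p0.length := by
            intro heq
            apply hh
            rw [← hp0] at heq
            exact eq_of_indexOf_append_cons heq
          simp only [List.length_append, List.length_singleton]
          omega
    · by_cases hdisp : s.asgn d = some h0
      · -- d is the displaced doctor
        rcases hs.opt hst hμ with hx | hx
        · -- previously matched to h, so h = h0 : derive a contradiction via a blocking pair
          exfalso
          have hh : h = h0 := by
            rw [hdisp] at hx; exact (Option.some_injective _ hx).symm
          subst hh
          have hcur : curMatch s.asgn h = some d :=
            curMatch_eq_some_of (fun d1 d2 hx1 hx2 => hs.inj hx1 hx2) hdisp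
          have hμH : μH h = some d := (hst.1 d h).mp hμ
          apply hst.2.2 d0 h
          refine ⟨?_, ?_⟩
          · -- dPrefers M d0 h (μD d0)
            have hh0mem : h ∈ M.dpref d0 := by
              rw [← hp0]; exact List.mem_append_right _ (List.mem_cons_self)
            cases hμ0 : μD d0 with
            | none => exact hh0mem
            | some h'' =>
              refine ⟨hh0mem, ?_⟩
              have hne'' : h'' ≠ h := by
                rintro rfl
                have := (hst.1 d0 h'').mp hμ0
                rw [hμH] at this
                exact hd (Option.some_injective _ this)
              rcases hs.opt hst hμ0 with hy | hy
              · rw [hnone] at hy; exact absurd hy (by simp)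
              · have h1 : p0.length ≤ (M.dpref d0).idxOf h'' :=
                  hy (show M.dpref d0 = p0 ++ s.rem d0 by rw [hrem]; exact hp0.symm)
                have h2 : (M.dpref d0).idxOf h'' ≠ p0.length := by
                  intro heq
                  apply hne''
                  rw [← hp0] at heq
                  exact eq_of_indexOf_append_cons heq
                have h3 : (M.dpref d0).idxOf h ≤ p0.length := by
                  rw [← hp0]; exact indexOf_append_cons_le _ _ _
                omega
          · -- hPrefers M h d0 (μH h)
            rw [hμH]
            exact ⟨hd0h0, hbeat d hcur⟩
        · right
          intro p hpd
          rw [if_neg hd] at hpd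
          exact hx hpd
      · rcases hs.opt hst hμ with hx | hx
        · left
          rw [if_neg hd, if_neg hdisp]
          exact hx
        · right
          intro p hpd
          rw [if_neg hd] at hpd
          exact hx hpd

end TruncAux
namespace TruncAux
variable {D H : Type*} [Fintype D] [DecidableEq D] [DecidableEq H]

set_option maxHeartbeats 1000000 in
lemma inv_reject {M : Market D H} {s : MState D H} (hs : Inv M s)
    {d0 : D} {h0 : H} {rest : List H}
    (hnone : s.asgn d0 = none) (hrem : s.rem d0 = h0 :: rest)
    (hacc : ¬ accepts M h0 d0 (curMatch s.asgn h0) = true) :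
    Inv M { asgn := s.asgn, rem := fun d' => if d' = d0 then rest else s.rem d' } := by
  obtain ⟨p0, hp0⟩ := hs.suff d0
  rw [hrem] at hp0
  -- rejection facts
  have hrej : d0 ∈ M.hpref h0 → ∃ d1, curMatch s.asgn h0 = some d1 ∧ d1 ∈ M.hpref h0 ∧
      (M.hpref h0).idxOf d1 < (M.hpref h0).idxOf d0 := by
    intro hmem
    cases hcur : curMatch s.asgn h0 with
    | none =>
      exfalso; apply hacc
      rw [hcur]
      simp [accepts, hmem]
    | some d1 =>
      rw [hcur] at hacc
      simp [accepts, hmem] at hacc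
      have hd1 : d1 ∈ M.hpref h0 := (hs.matched (asgn_of_curMatch_eq_some hcur)).2
      have hne : d1 ≠ d0 := by
        rintro rfl
        rw [asgn_of_curMatch_eq_some hcur] at hnone
        exact absurd hnone (by simp)
      refine ⟨d1, rfl, hd1, lt_of_le_of_ne hacc ?_⟩
      intro he
      exact hne (eq_of_indexOf_eq hd1 hmem he)
  constructor
  · exact fun d d' h hx hy => hs.inj hx hy
  · intro d
    by_cases hd : d = d0
    · subst hd
      simp only [if_pos rfl]
      exact ⟨p0 ++ [h0], by simpa using hp0⟩
    · simp only [if_neg hd]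
      exact hs.suff d
  · intro d h hx
    simp only at hx ⊢
    have hd : d ≠ d0 := by
      rintro rfl; rw [hnone] at hx; exact absurd hx (by simp)
    rw [if_neg hd]
    exact hs.matched hx
  · intro d h p hpd hhp hdh
    simp only at hpd ⊢
    by_cases hd : d = d0
    · subst hd
      rw [if_pos rfl] at hpd
      have hp : p = p0 ++ [h0] := by
        apply List.append_cancel_right (bs := rest)
        rw [← hpd, ← hp0]; simp
      subst hp
      rcases List.mem_append.mp hhp with hmem | hmem
      · exact hs.hmono (show M.dpref d = p0 ++ s.rem d by rw [hrem]; exact hp0.symm) hmem hdh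
      · have hh : h = h0 := by simpa using hmem
        subst hh
        obtain ⟨d1, hcm, hd1, hlt⟩ := hrej hdh
        exact ⟨d1, hcm, hd1, le_of_lt hlt⟩
    · rw [if_neg hd] at hpd
      exact hs.hmono hpd hhp hdh
  · intro μD μH hst d h hμ
    simp only
    by_cases hd : d = d0
    · subst hd
      rcases hs.opt hst hμ with hx | hx
      · rw [hnone] at hx; exact absurd hx (by simp)
      · right
        intro p hpd
        rw [if_pos rfl] at hpd
        have hp : p = p0 ++ [h0] := by
          apply List.append_cancel_right (bs := rest)
          rw [← hpd, ← hp0]; simp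
        subst hp
        have h1 : p0.length ≤ (M.dpref d).idxOf h :=
          hx (show M.dpref d = p0 ++ s.rem d by rw [hrem]; exact hp0.symm)
        have h2 : (M.dpref d).idxOf h ≠ p0.length := by
          intro heq
          -- then h = h0 and μ matches d to h0, contradiction via blocking pair (d1, h0)
          exfalso
          have hh : h = h0 := by
            rw [← hp0] at heq
            exact eq_of_indexOf_append_cons heq
          subst hh
          have hmem0 : d ∈ M.hpref h := (hst.2.1 d h hμ).2
          obtain ⟨d1, hcm, hd1, hlt⟩ := hrej hmem0
          have ha1 : s.asgn d1 = some h := asgn_of_curMatch_eq_some hcm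
          have hμH : μH h = some d := (hst.1 d h).mp hμ
          have hne1 : d1 ≠ d := by
            rintro rfl; rw [ha1] at hnone; exact absurd hnone (by simp)
          obtain ⟨⟨q, hq⟩, -⟩ := hs.matched ha1
          apply hst.2.2 d1 h
          refine ⟨?_, ?_⟩
          · -- dPrefers M d1 h (μD d1)
            have hhmem : h ∈ M.dpref d1 := by
              rw [← hq]; exact List.mem_append_right _ (List.mem_cons_self)
            cases hμ1 : μD d1 with
            | none => exact hhmem
            | some h'' =>
              refine ⟨hhmem, ?_⟩
              have hne'' : h'' ≠ h := by
                rintro rfl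
                have := (hst.1 d1 h'').mp hμ1
                rw [hμH] at this
                exact hne1 (Option.some_injective _ this).symm
              rcases hs.opt hst hμ1 with hy | hy
              · rw [ha1] at hy
                exact absurd (Option.some_injective _ hy).symm hne''
              · have h5 : (q ++ [h]).length ≤ (M.dpref d1).idxOf h'' :=
                  hy (show M.dpref d1 = (q ++ [h]) ++ s.rem d1 by rw [← hq]; simp)
                have h6 : (M.dpref d1).idxOf h ≤ q.length := by
                  rw [← hq]; exact indexOf_append_cons_le _ _ _
                have h7 : (q ++ [h]).length = q.length + 1 := by simp
                omega
          · -- hPrefers M h d1 (μH h)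
            rw [hμH]
            exact ⟨hd1, hlt⟩
        simp only [List.length_append, List.length_singleton]
        omega
    · rw [if_neg hd]
      rcases hs.opt hst hμ with hx | hx
      · exact Or.inl hx
      · exact Or.inr hx

lemma inv_step {M : Market D H} {s : MState D H} (hs : Inv M s) : Inv M (stepF M s) := by
  cases hF : (Finset.univ.filter (fun d => s.asgn d = none ∧ s.rem d ≠ [])).toList.head? with
  | none =>
    have hdone : Done s := by
      rw [← filter_eq_empty_iff_done, ← Finset.toList_eq_nil]
      exact List.head?_eq_none_iff.mp hF
    rw [stepF_eq_self_of_done hdone]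
    exact hs
  | some d0 =>
    have hd0 := head?_filter_mem hF
    cases hrem : s.rem d0 with
    | nil => exact absurd hrem hd0.2
    | cons h0 rest =>
      rw [stepF_eq hF hrem]
      by_cases hacc : accepts M h0 d0 (curMatch s.asgn h0) = true
      · rw [if_pos hacc]
        exact inv_accept hs hd0.1 hrem hacc
      · rw [if_neg hacc]
        exact inv_reject hs hd0.1 hrem hacc

lemma inv_dpdaState (M : Market D H) : Inv M (dpdaState M) := by
  unfold dpdaState
  generalize dpdaFuel M = n
  induction n with
  | zero => exact inv_init M
  | succ m ih =>
    rw [Function.iterate_succ_apply']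
    exact inv_step ih

end TruncAux
namespace TruncAux
variable {D H : Type*} [Fintype D] [DecidableEq D] [DecidableEq H]

lemma dpda_isStable (M : Market D H) : IsStable M (dpda M) (dpdaH M) := by
  have hi := inv_dpdaState M
  have hdone := done_dpdaState M
  refine ⟨?_, ?_, ?_⟩
  · intro d h
    constructor
    · intro hx
      exact curMatch_eq_some_of (fun a b ha hb => hi.inj ha hb) hx
    · exact asgn_of_curMatch_eq_some
  · intro d h hx
    obtain ⟨hsuf, hmem⟩ := hi.matched hx
    exact ⟨hsuf.subset (List.mem_cons_self), hmem⟩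
  · rintro d h ⟨hdp, hhp⟩
    -- `d` must have proposed to `h` already
    have hprop : ∃ p, M.dpref d = p ++ (dpdaState M).rem d ∧ h ∈ p := by
      rw [show dpda M d = (dpdaState M).asgn d from rfl] at hdp
      cases ha : (dpdaState M).asgn d with
      | none =>
        have hnil : (dpdaState M).rem d = [] := hdone d ha
        rw [ha] at hdp
        have hmem : h ∈ M.dpref d := hdp
        exact ⟨M.dpref d, by rw [hnil, List.append_nil], hmem⟩
      | some h' =>
        rw [ha] at hdp
        obtain ⟨hmem, hlt⟩ := hdp
        obtain ⟨⟨q, hq⟩, -⟩ := hi.matched ha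
        have hle : (M.dpref d).idxOf h' ≤ q.length := by
          rw [← hq]; exact indexOf_append_cons_le _ _ _
        have hmemq : h ∈ q := by
          have := mem_take_of_indexOf_lt (i := q.length) hmem (by omega)
          rwa [← hq, List.take_left] at this
        exact ⟨q ++ [h'], by rw [← hq]; simp, List.mem_append_left _ hmemq⟩
    obtain ⟨p, hpd, hhp'⟩ := hprop
    have hdmem : d ∈ M.hpref h := by
      cases hcur : curMatch (dpdaState M).asgn h with
      | none => rw [show dpdaH M h = curMatch (dpdaState M).asgn h from rfl, hcur] at hhp
                exact hhp
      | some d' => rw [show dpdaH M h = curMatch (dpdaState M).asgn h from rfl, hcur] at hhp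
                   exact hhp.1
    obtain ⟨d'', hcm, -, hle⟩ := hi.hmono hpd hhp' hdmem
    rw [show dpdaH M h = curMatch (dpdaState M).asgn h from rfl, hcm] at hhp
    exact absurd hhp.2 (by omega)

lemma dpda_opt {M : Market D H} {μD : D → Option H} {μH : H → Option D}
    (hst : IsStable M μD μH) {d : D} {h : H} (hμ : μD d = some h) :
    ∃ h', dpda M d = some h' ∧ (M.dpref d).idxOf h' ≤ (M.dpref d).idxOf h := by
  have hi := inv_dpdaState M
  have hdone := done_dpdaState M
  rcases hi.opt hst hμ with hx | hx
  · exact ⟨h, hx, le_refl _⟩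
  · cases ha : (dpdaState M).asgn d with
    | none =>
      exfalso
      have hnil : (dpdaState M).rem d = [] := hdone d ha
      have h1 : (M.dpref d).length ≤ (M.dpref d).idxOf h :=
        hx (p := M.dpref d) (by rw [hnil, List.append_nil])
      have h2 : (M.dpref d).idxOf h < (M.dpref d).length :=
        List.idxOf_lt_length_iff.2 (hst.2.1 d h hμ).1
      omega
    | some h' =>
      obtain ⟨⟨q, hq⟩, -⟩ := hi.matched ha
      have h1 : (q ++ [h']).length ≤ (M.dpref d).idxOf h :=
        hx (p := q ++ [h']) (by rw [← hq]; simp)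
      have h2 : (M.dpref d).idxOf h' ≤ q.length := by
        rw [← hq]; exact indexOf_append_cons_le _ _ _
      have h3 : (q ++ [h']).length = q.length + 1 := by simp
      exact ⟨h', ha, by omega⟩

lemma rural {M : Market D H} {μD : D → Option H} {μH : H → Option D}
    (hst : IsStable M μD μH) {hstar : H} {d : D}
    (hμ : μH hstar = some d) : ∃ d', dpdaH M hstar = some d' := by
  classical
  have hν := dpda_isStable M
  set ν := dpda M with hνdef
  set A := Finset.univ.filter (fun d => (μD d).isSome) with hA
  set B := Finset.univ.filter (fun d => (ν d).isSome) with hB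
  have hAB : A ⊆ B := by
    intro a ha
    rw [hA, Finset.mem_filter] at ha
    obtain ⟨h, hh⟩ := Option.isSome_iff_exists.mp ha.2
    obtain ⟨h', hh', -⟩ := dpda_opt hst hh
    rw [hB, Finset.mem_filter]
    exact ⟨Finset.mem_univ _, by rw [← hνdef] at hh'; rw [hh']; rfl⟩
  have claim2 : B.image ν ⊆ A.image μD := by
    intro x hx
    obtain ⟨b, hb, rfl⟩ := Finset.mem_image.mp hx
    rw [hB, Finset.mem_filter] at hb
    obtain ⟨h, hh⟩ := Option.isSome_iff_exists.mp hb.2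
    rw [Finset.mem_image]
    by_contra hcon
    push_neg at hcon
    -- h is unmatched in μ
    have hμh : μH h = none := by
      cases hμh : μH h with
      | none => rfl
      | some a =>
        exfalso
        have haA : μD a = some h := (hst.1 a h).mpr hμh
        refine hcon a ?_ ?_
        · rw [hA, Finset.mem_filter]; exact ⟨Finset.mem_univ _, by rw [haA]; rfl⟩
        · rw [haA, hh]
    -- blocking pair (b, h) against μ
    exfalso
    apply hst.2.2 b h
    have hbh : h ∈ M.dpref b := (hν.2.1 b h hh).1
    have hbmem : b ∈ M.hpref h := (hν.2.1 b h hh).2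
    refine ⟨?_, ?_⟩
    · cases hμb : μD b with
      | none => exact hbh
      | some h'' =>
        refine ⟨hbh, ?_⟩
        have hne : h'' ≠ h := by
          rintro rfl
          rw [(hst.1 b h'').mp hμb] at hμh
          exact absurd hμh (by simp)
        obtain ⟨h3, hν3, hle3⟩ := dpda_opt hst hμb
        rw [← hνdef, hh] at hν3
        have h3h : h3 = h := (Option.some_injective _ hν3).symm
        subst h3h
        have hmem'' : h'' ∈ M.dpref b := (hst.2.1 b h'' hμb).1
        rcases lt_or_eq_of_le hle3 with hlt | heq
        · exact hlt
        · exact absurd (eq_of_indexOf_eq hbh hmem'' heq).symm hne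
    · rw [hμh]
      exact hbmem
  have hcardA : (A.image μD).card = A.card := by
    apply Finset.card_image_of_injOn
    intro a1 h1 a2 h2 he
    have h1' : (μD a1).isSome := by simpa [hA] using h1
    obtain ⟨h, hh⟩ := Option.isSome_iff_exists.mp h1'
    have : μD a2 = some h := by rw [← he, hh]
    exact Option.some_injective _ (((hst.1 a1 h).mp hh).symm.trans ((hst.1 a2 h).mp this))
  have hcardB : (B.image ν).card = B.card := by
    apply Finset.card_image_of_injOn
    intro a1 h1 a2 h2 he
    have h1' : (ν a1).isSome := by simpa [hB] using h1
    obtain ⟨h, hh⟩ := Option.isSome_iff_exists.mp h1'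
    have : ν a2 = some h := by rw [← he, hh]
    exact Option.some_injective _ (((hν.1 a1 h).mp hh).symm.trans ((hν.1 a2 h).mp this))
  have heq : B.image ν = A.image μD := by
    apply Finset.eq_of_subset_of_card_le claim2
    rw [hcardA, hcardB]
    exact Finset.card_le_card hAB
  -- hstar is matched in μ, hence in ν
  have hdμ : μD d = some hstar := (hst.1 d hstar).mpr hμ
  have hmemA : (some hstar : Option H) ∈ A.image μD := by
    rw [Finset.mem_image]
    exact ⟨d, by rw [hA, Finset.mem_filter]; exact ⟨Finset.mem_univ _, by rw [hdμ]; rfl⟩, hdμ⟩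
  rw [← heq, Finset.mem_image] at hmemA
  obtain ⟨d', -, hd'⟩ := hmemA
  refine ⟨d', ?_⟩
  exact curMatch_eq_some_of (fun a b ha hb => (inv_dpdaState M).inj ha hb) hd'

end TruncAux
namespace TruncAux
variable {D H : Type*} [Fintype D] [DecidableEq D] [DecidableEq H]

lemma hpref_truncate (M : Market D H) (hstar : H) (i : ℕ) :
    (truncate M hstar i).hpref hstar = (M.hpref hstar).take i := by
  simp [truncate]

lemma hpref_truncate_ne (M : Market D H) {hstar h : H} (i : ℕ) (hh : h ≠ hstar) :
    (truncate M hstar i).hpref h = M.hpref h := by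
  simp [truncate, hh]

lemma stable_of_truncated_stable {M : Market D H} {hstar : H} {i : ℕ}
    {μD : D → Option H} {μH : H → Option D} {d : D}
    (hst : IsStable (truncate M hstar i) μD μH) (hμ : μH hstar = some d) :
    IsStable M μD μH := by
  have hμD : μD d = some hstar := (hst.1 d hstar).mpr hμ
  have hd_take : d ∈ (M.hpref hstar).take i := by
    have := (hst.2.1 d hstar hμD).2
    rwa [hpref_truncate] at this
  refine ⟨hst.1, ?_, ?_⟩
  · intro d' h hx
    obtain ⟨h1, h2⟩ := hst.2.1 d' h hx
    refine ⟨h1, ?_⟩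
    by_cases hh : h = hstar
    · subst hh
      rw [hpref_truncate] at h2
      exact List.take_subset _ _ h2
    · rwa [hpref_truncate_ne M _ hh] at h2
  · rintro d' h ⟨hdp, hhp⟩
    apply hst.2.2 d' h
    refine ⟨hdp, ?_⟩
    by_cases hh : h = hstar
    · subst hh
      rw [hμ] at hhp ⊢
      obtain ⟨hmem, hlt⟩ := hhp
      have hdlt : (M.hpref h).idxOf d < i := indexOf_lt_of_mem_take hd_take
      have hd't : d' ∈ (M.hpref h).take i := mem_take_of_indexOf_lt hmem (by omega)
      refine ⟨?_, ?_⟩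
      · rw [hpref_truncate]; exact hd't
      · rw [hpref_truncate, indexOf_take hd't, indexOf_take hd_take]
        exact hlt
    · cases hcur : μH h with
      | none =>
        rw [hcur] at hhp
        show d' ∈ (truncate M hstar i).hpref h
        rw [hpref_truncate_ne M _ hh]
        exact hhp
      | some d2 =>
        rw [hcur] at hhp
        obtain ⟨hmem, hlt⟩ := hhp
        show d' ∈ (truncate M hstar i).hpref h ∧
          ((truncate M hstar i).hpref h).idxOf d' < ((truncate M hstar i).hpref h).idxOf d2
        rw [hpref_truncate_ne M _ hh]
        exact ⟨hmem, hlt⟩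

lemma truncated_stable {M : Market D H} {hstar : H} {i : ℕ}
    {μD : D → Option H} {μH : H → Option D} {d : D}
    (hst : IsStable M μD μH) (hμ : μH hstar = some d)
    (hd : d ∈ (M.hpref hstar).take i) :
    IsStable (truncate M hstar i) μD μH := by
  refine ⟨hst.1, ?_, ?_⟩
  · intro d' h hx
    obtain ⟨h1, h2⟩ := hst.2.1 d' h hx
    refine ⟨h1, ?_⟩
    by_cases hh : h = hstar
    · subst hh
      have hd' : d' = d := by
        have := (hst.1 d' h).mp hx
        rw [hμ] at this
        exact Option.some_injective _ this.symm
      subst hd'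
      rw [hpref_truncate]
      exact hd
    · rwa [hpref_truncate_ne M _ hh]
  · rintro d' h ⟨hdp, hhp⟩
    apply hst.2.2 d' h
    refine ⟨hdp, ?_⟩
    by_cases hh : h = hstar
    · subst hh
      rw [hμ] at hhp ⊢
      obtain ⟨hmem, hlt⟩ := hhp
      rw [hpref_truncate] at hmem hlt
      refine ⟨List.take_subset _ _ hmem, ?_⟩
      rw [indexOf_take hmem, indexOf_take hd] at hlt
      exact hlt
    · cases hcur : μH h with
      | none =>
        rw [hcur] at hhp
        have hhp' : d' ∈ (truncate M hstar i).hpref h := hhp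
        rw [hpref_truncate_ne M _ hh] at hhp'
        exact hhp'
      | some d2 =>
        rw [hcur] at hhp
        obtain ⟨hmem, hlt⟩ := hhp
        rw [hpref_truncate_ne M _ hh] at hmem hlt
        exact ⟨hmem, hlt⟩

end TruncAux
/-- **Truncation lemma.** Fix a hospital `h⋆` and a preference
profile `P`, and let `P_i` be `P` with `h⋆`'s list truncated at rank `i`.
Then `h⋆` has a stable partner (under `P`) of rank better than `i` (i.e. among
the first `i` doctors on its list) if and only if `h⋆` is matched in the
doctor-optimal stable matching (the output of doctor-proposing deferred
acceptance) for `P_i`. -/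
theorem truncation_lemma {D H : Type*} [Fintype D] [DecidableEq D] [DecidableEq H]
    (M : Market D H) (hstar : H) (i : ℕ) :
    (∃ (μD : D → Option H) (μH : H → Option D) (d : D),
        IsStable M μD μH ∧ μH hstar = some d ∧ d ∈ (M.hpref hstar).take i) ↔
      (∃ d : D, dpdaH (truncate M hstar i) hstar = some d) := by
  constructor
  · rintro ⟨μD, μH, d, hst, hμ, hd⟩
    exact TruncAux.rural (TruncAux.truncated_stable hst hμ hd) hμ
  · rintro ⟨d, hd⟩
    have hst := TruncAux.dpda_isStable (truncate M hstar i)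
    have hμD : dpda (truncate M hstar i) d = some hstar := (hst.1 d hstar).mpr hd
    have hdt : d ∈ (M.hpref hstar).take i := by
      have := (hst.2.1 d hstar hμD).2
      rwa [TruncAux.hpref_truncate] at this
    exact ⟨dpda (truncate M hstar i), dpdaH (truncate M hstar i), d,
      TruncAux.stable_of_truncated_stable hst hd, hd, hdt⟩
end

section
/- Any matching that is stable for the truncated profile P_i and in which h* is matched (necessarily to a doctor h* ranks better than i) is also stable for the original profile P. -/
variable {D H : Type*}

theorem aux1 {α} [DecidableEq α] (l : List α) (a : α) (i : ℕ) (h : a ∈ l.take i) :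
    a ∈ l ∧ l.idxOf a < i := by
  induction l generalizing i with
  | nil => simp at h
  | cons b t ih =>
    cases i with
    | zero => simp at h
    | succ n =>
      simp only [List.take_succ_cons, List.mem_cons] at h
      by_cases hab : a = b
      · subst hab; simp [List.idxOf_cons_self]
      · rcases h with h | h
        · exact absurd h hab
        · obtain ⟨h1, h2⟩ := ih n h
          refine ⟨List.mem_cons_of_mem _ h1, ?_⟩
          rw [List.idxOf_cons_ne _ (by exact fun e => hab e.symm)]
          omega

theorem aux2 {α} [DecidableEq α] (l : List α) (a : α) (i : ℕ) (h : a ∈ l)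
    (h2 : l.idxOf a < i) : a ∈ l.take i ∧ (l.take i).idxOf a = l.idxOf a := by
  induction l generalizing i with
  | nil => simp at h
  | cons b t ih =>
    cases i with
    | zero => simp at h2
    | succ n =>
      simp only [List.take_succ_cons]
      by_cases hab : a = b
      · subst hab; simp [List.idxOf_cons_self]
      · have hne : b ≠ a := fun e => hab e.symm
        rw [List.mem_cons] at h
        rcases h with h | h
        · exact absurd h hab
        · rw [List.idxOf_cons_ne _ hne] at h2 ⊢
          obtain ⟨h1, h3⟩ := ih n h (by omega)
          exact ⟨List.mem_cons_of_mem _ h1, by rw [List.idxOf_cons_ne _ hne, h3]⟩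

/-- Any matching that is stable for the truncated profile `P_i`
and in which `h⋆` is matched (necessarily to a doctor `h⋆` ranks better than
`i`) is also stable for the original profile `P`. -/
theorem stable_truncated_to_full {D H : Type*} [DecidableEq D] [DecidableEq H]
    (M : Market D H) (hstar : H) (i : ℕ)
    (μD : D → Option H) (μH : H → Option D)
    (hstable : IsStable (truncate M hstar i) μD μH)
    (hmatched : μH hstar ≠ none) :
    IsStable M μD μH := by
  obtain ⟨hm, hir, hnb⟩ := hstable
  have hdpref : (truncate M hstar i).dpref = M.dpref := rfl
  have hhne : ∀ h, h ≠ hstar → (truncate M hstar i).hpref h = M.hpref h := by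
    intro h hne; simp [truncate, hne]
  have hhs : (truncate M hstar i).hpref hstar = (M.hpref hstar).take i := by
    simp [truncate]
  refine ⟨hm, ?_, ?_⟩
  · intro d h hdh
    obtain ⟨h1, h2⟩ := hir d h hdh
    refine ⟨h1, ?_⟩
    by_cases he : h = hstar
    · subst he; rw [hhs] at h2; exact (aux1 _ _ _ h2).1
    · rwa [hhne h he] at h2
  · intro d h hb
    obtain ⟨hb1, hb2⟩ := hb
    refine hnb d h ⟨?_, ?_⟩
    · cases hμ : μD d with
      | none => rw [hμ] at hb1; exact hb1
      | some h' => rw [hμ] at hb1; exact hb1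
    · by_cases he : h = hstar
      · subst he
        cases hμ : μH h with
        | none => exact absurd hμ hmatched
        | some d0 =>
          rw [hμ] at hb2
          obtain ⟨hd1, hd2⟩ := hb2
          have hd0 : μD d0 = some h := (hm d0 h).2 hμ
          have hd0mem : d0 ∈ (truncate M h i).hpref h := (hir d0 h hd0).2
          rw [hhs] at hd0mem
          obtain ⟨hd0full, hd0lt⟩ := aux1 _ _ _ hd0mem
          have hdlt : (M.hpref h).idxOf d < i := lt_trans hd2 hd0lt
          obtain ⟨hdm, hde⟩ := aux2 _ d _ hd1 hdlt
          obtain ⟨_, hd0e⟩ := aux2 _ d0 _ hd0full hd0lt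
          show hPrefers (truncate M h i) h d (some d0)
          rw [hμ] at *
          refine ⟨by rwa [hhs], ?_⟩
          rw [hhs, hde, hd0e]
          exact hd2
      · show hPrefers (truncate M hstar i) h d (μH h)
        cases hμ : μH h with
        | none => rw [hμ] at hb2; show d ∈ _; rw [hhne h he]; exact hb2
        | some d0 =>
          rw [hμ] at hb2
          exact ⟨by rw [hhne h he]; exact hb2.1, by rw [hhne h he]; exact hb2.2⟩
end
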